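/- Let G = G³(n,p) and let s ≤ n, r ≤ C(n,2), i ≤ n be positive integers. The probability that there exist a vertex v ∈ [n] and a set S ⊆ [n] with v ∉ S and |S| = s, together with more than r pairs {y,z} of distinct vertices in [n]\S such that vyz ∈ G and d_S(y,z) ≥ i, is at most g(p,s,r,i) = n·C(n,s)·C(n²,r)·(p·C(s,i)·pⁱ)ʳ. -/

import Mathlib

open Finset MeasureTheory Filter

attribute [local instance] Classical.propDecidable

set_option maxHeartbeats 1000000

/-- A potential hyperedge: a 3-element subset of the vertex set `Fin n`. -/
abbrev Edge (n : ℕ) := {e : Finset (Fin n) // e.card = 3}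

/-- Bernoulli measure on `Bool` with parameter `p`. -/
noncomputable def bern (p : ℝ) : Measure Bool :=
  (Real.toNNReal p) • Measure.dirac true + (Real.toNNReal (1 - p)) • Measure.dirac false

/-- The law of the random 3-uniform hypergraph `G³(n,p)`: each triple is present
independently with probability `p`. A sample point `ω : Edge n → Bool` records which
triples are hyperedges. -/
noncomputable def hypM (n : ℕ) (p : ℝ) : Measure (Edge n → Bool) :=
  Measure.pi fun _ => bern p

/-- The set of hyperedges of the sampled hypergraph. -/
noncomputable def hedges {n : ℕ} (ω : Edge n → Bool) : Finset (Edge n) :=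
  Finset.univ.filter fun e => ω e = true

/-- The triple `s` is a hyperedge of the hypergraph `H`. -/
def memH {n : ℕ} (H : Finset (Edge n)) (s : Finset (Fin n)) : Prop :=
  ∃ e ∈ H, (e : Finset (Fin n)) = s

/-- `H` contains no copy of `F₅`, the hypergraph on `{1,...,5}` with edges
`{123, 124, 345}`. -/
def F5Free {n : ℕ} (H : Finset (Edge n)) : Prop :=
  ¬ ∃ f : Fin 5 → Fin n, Function.Injective f ∧
      memH H {f 0, f 1, f 2} ∧ memH H {f 0, f 1, f 3} ∧ memH H {f 2, f 3, f 4}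

/-- `H` is tripartite: the vertex set can be partitioned into three parts such that
every hyperedge has exactly one vertex in each part. -/
def Tripartite {n : ℕ} (H : Finset (Edge n)) : Prop :=
  ∃ V : Fin 3 → Finset (Fin n),
    (∀ v : Fin n, ∃! i : Fin 3, v ∈ V i) ∧
    ∀ e ∈ H, ∀ i : Fin 3, ((e : Finset (Fin n)) ∩ V i).card = 1

/-- `(V₁, V₂, V₃)` is a 3-partition of the vertex set. -/
def IsPartition3 {n : ℕ} (V₁ V₂ V₃ : Finset (Fin n)) : Prop :=
  Disjoint V₁ V₂ ∧ Disjoint V₁ V₃ ∧ Disjoint V₂ V₃ ∧ V₁ ∪ V₂ ∪ V₃ = Finset.univ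

/-- A balanced 3-partition: every part has size `(1 ± 10⁻¹⁰) n / 3`. -/
def Balanced3 {n : ℕ} (V₁ V₂ V₃ : Finset (Fin n)) : Prop :=
  IsPartition3 V₁ V₂ V₃ ∧
    ∀ V ∈ [V₁, V₂, V₃],
      (1 - 1e-10 : ℝ) * n / 3 ≤ (V.card : ℝ) ∧ (V.card : ℝ) ≤ (1 + 1e-10 : ℝ) * n / 3

/-- The crossing hyperedges of `H` w.r.t. `(V₁,V₂,V₃)`: those with exactly one vertex
in each part (i.e. `H ∩ K_π`). -/
noncomputable def crossing {n : ℕ} (V₁ V₂ V₃ : Finset (Fin n)) (H : Finset (Edge n)) :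
    Finset (Edge n) :=
  H.filter fun e => ((e : Finset (Fin n)) ∩ V₁).card = 1 ∧
    ((e : Finset (Fin n)) ∩ V₂).card = 1 ∧ ((e : Finset (Fin n)) ∩ V₃).card = 1

/-- The missing crossing hyperedges `H̄_π = G_π \ H_π`. -/
noncomputable def Hbar {n : ℕ} (ω : Edge n → Bool) (V₁ V₂ V₃ : Finset (Fin n))
    (H : Finset (Edge n)) : Finset (Edge n) :=
  crossing V₁ V₂ V₃ (hedges ω) \ crossing V₁ V₂ V₃ H

/-- `H_i`: the hyperedges of `H` with at least two vertices in the part `V`. -/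
noncomputable def bigPart {n : ℕ} (V : Finset (Fin n)) (H : Finset (Edge n)) :
    Finset (Edge n) :=
  H.filter fun e => 2 ≤ ((e : Finset (Fin n)) ∩ V).card

/-- `(V₁,V₂,V₃)` is a 3-partition maximizing the number `|H_π|` of crossing
hyperedges of `H`. -/
def MaximizesCrossing {n : ℕ} (H : Finset (Edge n)) (V₁ V₂ V₃ : Finset (Fin n)) : Prop :=
  IsPartition3 V₁ V₂ V₃ ∧ ∀ W₁ W₂ W₃ : Finset (Fin n), IsPartition3 W₁ W₂ W₃ →
    (crossing W₁ W₂ W₃ H).card ≤ (crossing V₁ V₂ V₃ H).card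

/-- The edge set of the shadow graph of `H`: pairs `{x,y}` contained in some
hyperedge of `H`. -/
noncomputable def shadowE {n : ℕ} (H : Finset (Edge n)) : Finset (Finset (Fin n)) :=
  (Finset.powersetCard 2 (Finset.univ : Finset (Fin n))).filter fun s =>
    ∃ e ∈ H, s ⊆ (e : Finset (Fin n))

/-- `J`: the induced subgraph on `V₁` of the shadow graph of `H₁`. -/
noncomputable def Jgraph {n : ℕ} (V₁ : Finset (Fin n)) (H : Finset (Edge n)) :
    Finset (Finset (Fin n)) :=
  (shadowE (bigPart V₁ H)).filter fun s => s ⊆ V₁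

/-- Degree of the vertex `x` in a graph given as a finset of (2-element) edges. -/
noncomputable def degIn {n : ℕ} (J : Finset (Finset (Fin n))) (x : Fin n) : ℕ :=
  (J.filter fun s => x ∈ s).card

/-- `d^H_{2,3}(x)`: the number of pairs `(y,z) ∈ V₂ × V₃` with `xyz ∈ H`. -/
noncomputable def d23 {n : ℕ} (H : Finset (Edge n)) (V₂ V₃ : Finset (Fin n)) (x : Fin n) : ℕ :=
  ((V₂ ×ˢ V₃).filter fun q => memH H {x, q.1, q.2}).card

/-- `d_S(x,y)`: the number of vertices `z ∈ S` with `xyz ∈ H`. -/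
noncomputable def codeg {n : ℕ} (H : Finset (Edge n)) (S : Finset (Fin n)) (x y : Fin n) : ℕ :=
  (S.filter fun z => memH H {x, y, z}).card

/-- `L_{2,3}(x,y)`: pairs `(y',z') ∈ V₂ × V₃` such that both `xy'z'` and `yy'z'`
are hyperedges of the sampled hypergraph. -/
noncomputable def L23 {n : ℕ} (ω : Edge n → Bool) (V₂ V₃ : Finset (Fin n)) (x y : Fin n) :
    Finset (Fin n × Fin n) :=
  (V₂ ×ˢ V₃).filter fun q =>
    memH (hedges ω) {x, q.1, q.2} ∧ memH (hedges ω) {y, q.1, q.2}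

/-- `Q(π)`: the pairs `{x,y} ⊆ V₁` with `|L_{2,3}(x,y)| < 0.8 p² n² / 9`. -/
noncomputable def Qset {n : ℕ} (ω : Edge n → Bool) (p : ℝ) (V₁ V₂ V₃ : Finset (Fin n)) :
    Finset (Finset (Fin n)) :=
  (Finset.powersetCard 2 V₁).filter fun s =>
    ∃ x ∈ s, ∃ y ∈ s, x ≠ y ∧
      ((L23 ω V₂ V₃ x y).card : ℝ) < 0.8 * p ^ 2 * (n : ℝ) ^ 2 / 9

/-- The degree `d(v)` of a vertex: the number of hyperedges containing `v`. -/
noncomputable def vdeg {n : ℕ} (ω : Edge n → Bool) (v : Fin n) : ℕ :=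
  ((hedges ω).filter fun e => v ∈ (e : Finset (Fin n))).card

/-- `t(G)`: the number of hyperedges of a maximum tripartite subhypergraph of `G`. -/
noncomputable def tG {n : ℕ} (ω : Edge n → Bool) : ℕ :=
  (((hedges ω).powerset).filter fun H => Tripartite H).sup Finset.card

/-- `G(v,E,A,T) = K(v,E,A,T) ∩ G` where
`K(v,E,A,T) = {xyz : x ∈ A, {y,z} ∈ T, ∃ e ∈ E, x ∈ e, y ∉ e, z ∉ e}`. -/
noncomputable def GvEAT {n : ℕ} (ω : Edge n → Bool) (A : Finset (Fin n))
    (T : Finset (Finset (Fin n))) (E : Finset (Edge n)) : Finset (Edge n) :=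
  (hedges ω).filter fun f => ∃ x ∈ A, ∃ t ∈ T, (f : Finset (Fin n)) = insert x t ∧
    ∃ e ∈ E, x ∈ (e : Finset (Fin n)) ∧ ∀ z ∈ t, z ∉ (e : Finset (Fin n))

/-- `{w₁, w₂, y, z}` spans an `F̂₅` (w.r.t. `H` and the partition `(V₁,V₂,V₃)`):
`w₁yz, w₂yz ∈ G_π` and there exists `e ∈ H` with `w₁, w₂ ∈ e ∩ V₁` and `y, z ∉ e`. -/
def F5hat {n : ℕ} (ω : Edge n → Bool) (H : Finset (Edge n)) (V₁ V₂ V₃ : Finset (Fin n))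
    (w₁ w₂ y z : Fin n) : Prop :=
  memH (crossing V₁ V₂ V₃ (hedges ω)) {w₁, y, z} ∧
  memH (crossing V₁ V₂ V₃ (hedges ω)) {w₂, y, z} ∧
  ∃ e ∈ H, w₁ ∈ (e : Finset (Fin n)) ∧ w₂ ∈ (e : Finset (Fin n)) ∧
    w₁ ∈ V₁ ∧ w₂ ∈ V₁ ∧ y ∉ (e : Finset (Fin n)) ∧ z ∉ (e : Finset (Fin n))

/-- `g(p,s,r,i) = n · C(n,s) · C(n²,r) · (p · C(s,i) · pⁱ)ʳ`. -/
noncomputable def gbound (n : ℕ) (p : ℝ) (s r i : ℕ) : ℝ :=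
  (n : ℝ) * (n.choose s) * ((n ^ 2).choose r) * (p * (s.choose i) * p ^ i) ^ r

/-
Union bound over certificates. If the event holds for `v` and `S`, pick `r` of the counted pairs
`t = yz`; each forms a hyperedge with `v` and with `i` vertices `I t ⊆ S`. These `r (i + 1)`
triples `xt` are distinct, since `t` is recovered from `xt` by removing `S ∪ {v}`, so all of them
are present with probability `p ^ (r (i + 1))`. There are at most `n` choices of `v`, `C(n, s)` of
`S`, `C(n², r)` of the pairs and `C(s, i) ^ r` of the sets `I t`.
-/

lemma bern_apply (p : ℝ) (A : Set Bool) :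
    bern p A = p.toNNReal * A.indicator 1 true + (1 - p).toNNReal * A.indicator 1 false := by
  simp [bern, -Measure.coe_nnreal_smul, ENNReal.smul_def]

lemma bern_singleton_true (p : ℝ) : bern p {true} = ENNReal.ofReal p := by
  simp [bern_apply, ENNReal.ofReal]

lemma bern_univ {p : ℝ} (hp0 : 0 ≤ p) (hp1 : p ≤ 1) : bern p Set.univ = 1 := by
  rw [bern_apply, ← ENNReal.ofReal, ← ENNReal.ofReal]
  simp [← ENNReal.ofReal_add hp0 (sub_nonneg.mpr hp1)]

instance (p : ℝ) : IsFiniteMeasure (bern p) := by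
  unfold bern; infer_instance

lemma pi_bern_forall_true {ι : Type*} [Fintype ι] {p : ℝ} (hp0 : 0 ≤ p) (hp1 : p ≤ 1)
    (A : Finset ι) :
    Measure.pi (fun _ : ι => bern p) {ω | ∀ e ∈ A, ω e = true} = ENNReal.ofReal p ^ #A := by
  have hset : {ω : ι → Bool | ∀ e ∈ A, ω e = true} =
      Set.univ.pi fun e => if e ∈ A then {true} else Set.univ := by
    ext ω
    simp only [Set.mem_ofPred_eq, Set.mem_pi, Set.mem_univ, forall_const]
    refine forall_congr' fun e => ?_
    split_ifs <;> simp [*]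
  rw [hset, Measure.pi_pi]
  simp only [apply_ite, bern_singleton_true, bern_univ hp0 hp1, Finset.prod_ite_mem,
    Finset.univ_inter, Finset.prod_const]

lemma measure_biUnion_finset_le_mul {α ι : Type*} [MeasurableSpace α] (μ : Measure α)
    {s : Finset ι} {f : ι → Set α} {N : ℕ} {c : ENNReal} (hs : #s ≤ N)
    (hf : ∀ b ∈ s, μ (f b) ≤ c) : μ (⋃ b ∈ s, f b) ≤ N * c :=
  calc μ (⋃ b ∈ s, f b) ≤ ∑ b ∈ s, μ (f b) := measure_biUnion_finset_le s f
    _ ≤ #s • c := Finset.sum_le_card_nsmul s _ c hf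
    _ ≤ N * c := by rw [nsmul_eq_mul]; gcongr

lemma card_piFinset_ite_singleton {ι β : Type*} [Fintype ι] [DecidableEq ι] [DecidableEq β]
    (R : Finset ι) (A : Finset β) (b : β) :
    #(Fintype.piFinset fun t => if t ∈ R then A else {b}) = #A ^ #R := by
  simp only [Fintype.card_piFinset, apply_ite, card_singleton, Finset.prod_ite_mem,
    Finset.univ_inter, Finset.prod_const]

lemma card_biUnion_image_insert {α : Type*} [DecidableEq α] {U : Finset α}
    {R : Finset (Finset α)} {X : Finset α → Finset α}
    (hR : ∀ t ∈ R, Disjoint t U) (hX : ∀ t ∈ R, X t ⊆ U) :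
    #(R.biUnion fun t => (X t).image (insert · t)) = ∑ t ∈ R, #(X t) := by
  have not_mem : ∀ t ∈ R, ∀ x ∈ X t, x ∉ t := fun t ht x hx hxt =>
    disjoint_left.mp (hR t ht) hxt (hX t ht hx)
  have sdiff_eq : ∀ t ∈ R, ∀ x ∈ X t, insert x t \ U = t := fun t ht x hx => by
    rw [insert_sdiff_of_mem _ (hX t ht hx), sdiff_eq_self_of_disjoint (hR t ht)]
  rw [card_biUnion]
  · refine sum_congr rfl fun t ht => card_image_of_injOn fun x hx y _ hxy => ?_
    have : x ∈ insert y t := hxy ▸ mem_insert_self x t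
    exact (mem_insert.mp this).resolve_right (not_mem t ht x hx)
  · intro t ht t' ht' hne
    simp only [Function.onFun, disjoint_left, mem_image]
    rintro _ ⟨x, hx, rfl⟩ ⟨x', hx', hxx'⟩
    exact hne (by rw [← sdiff_eq t ht x hx, ← sdiff_eq t' ht' x' hx', hxx'])

section Fans

variable {n : ℕ}

def allPresent (F : Finset (Finset (Fin n))) : Set (Edge n → Bool) :=
  {ω | ∀ e : Edge n, (e : Finset (Fin n)) ∈ F → ω e = true}

lemma hypM_allPresent {p : ℝ} (hp0 : 0 ≤ p) (hp1 : p ≤ 1) {F : Finset (Finset (Fin n))}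
    (hF : ∀ a ∈ F, #a = 3) : hypM n p (allPresent F) = ENNReal.ofReal p ^ #F := by
  have : allPresent F = {ω | ∀ e ∈ F.subtype (#· = 3), ω e = true} := by
    ext ω; simp [allPresent, mem_subtype]
  rw [hypM, this, pi_bern_forall_true hp0 hp1, card_subtype, filter_true_of_mem hF]

def fan (v : Fin n) (R : Finset (Finset (Fin n))) (I : Finset (Fin n) → Finset (Fin n)) :
    Finset (Finset (Fin n)) :=
  R.biUnion fun t => (insert v (I t)).image (insert · t)

variable {v : Fin n} {S : Finset (Fin n)} {R : Finset (Finset (Fin n))}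
  {I : Finset (Fin n) → Finset (Fin n)} {i : ℕ}

lemma card_fan (hvS : v ∉ S) (hR : R ⊆ powersetCard 2 (univ \ insert v S))
    (hI : ∀ t ∈ R, I t ∈ powersetCard i S) : #(fan v R I) = #R * (i + 1) := by
  have hRdisj : ∀ t ∈ R, Disjoint t (insert v S) := fun t ht =>
    (subset_sdiff.mp (mem_powersetCard.mp (hR ht)).1).2
  rw [fan, card_biUnion_image_insert hRdisj fun t ht => insert_subset_insert v
    (mem_powersetCard.mp (hI t ht)).1, sum_const_nat fun t ht => ?_, mul_comm]
  obtain ⟨hIS, hIcard⟩ := mem_powersetCard.mp (hI t ht)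
  rw [card_insert_of_notMem fun hv => hvS (hIS hv), hIcard]

lemma card_eq_three_of_mem_fan (hR : R ⊆ powersetCard 2 (univ \ insert v S))
    (hI : ∀ t ∈ R, I t ∈ powersetCard i S) : ∀ a ∈ fan v R I, #a = 3 := by
  simp only [fan, mem_biUnion, mem_image]
  rintro _ ⟨t, ht, x, hx, rfl⟩
  obtain ⟨htU, ht2⟩ := mem_powersetCard.mp (hR ht)
  have hxU : x ∈ insert v S :=
    insert_subset_insert v (mem_powersetCard.mp (hI t ht)).1 hx
  rw [card_insert_of_notMem fun hxt => (Finset.mem_sdiff.mp (htU hxt)).2 hxU, ht2]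

noncomputable def richPairs (ω : Edge n → Bool) (v : Fin n) (S : Finset (Fin n)) (i : ℕ) :
    Finset (Finset (Fin n)) :=
  (Finset.powersetCard 2 (Finset.univ \ S)).filter fun t =>
    memH (hedges ω) (insert v t) ∧ ∃ y ∈ t, ∃ z ∈ t, y ≠ z ∧ i ≤ codeg (hedges ω) S y z

lemma exists_fan_of_mem_richPairs {ω : Edge n → Bool} {t : Finset (Fin n)}
    (ht : t ∈ richPairs ω v S i) :
    t ∈ powersetCard 2 (univ \ insert v S) ∧
      ∃ J ∈ powersetCard i S, ∀ x ∈ insert v J, memH (hedges ω) (insert x t) := by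
  rw [richPairs, mem_filter, mem_powersetCard] at ht
  obtain ⟨⟨htS, ht2⟩, hvt, y, hy, z, hz, hyz, hi⟩ := ht
  have hv : v ∉ t := fun hv => by
    obtain ⟨e, -, he⟩ := hvt
    have := e.2
    rw [he, insert_eq_of_mem hv, ht2] at this
    omega
  have hyzx : ∀ x, ({y, z, x} : Finset (Fin n)) = insert x t := fun x => by
    rw [← eq_of_subset_of_card_le (insert_subset hy (singleton_subset_iff.2 hz))
      (by rw [ht2, card_pair hyz])]
    ext; simp only [mem_insert, mem_singleton]; tauto
  obtain ⟨J, hJ, hJi⟩ := exists_subset_card_eq hi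
  refine ⟨mem_powersetCard.mpr ⟨fun a ha => ?_, ht2⟩,
    J, mem_powersetCard.mpr ⟨hJ.trans (filter_subset _ _), hJi⟩, fun x hx => ?_⟩
  · rw [Finset.mem_sdiff, mem_insert, not_or]
    exact ⟨mem_univ a, ne_of_mem_of_not_mem ha hv, (Finset.mem_sdiff.mp (htS ha)).2⟩
  · rcases mem_insert.mp hx with rfl | hx
    · exact hvt
    · exact hyzx x ▸ (mem_filter.mp (hJ hx)).2

lemma eq_true_of_memH_hedges {ω : Edge n → Bool} {e : Edge n}
    (h : memH (hedges ω) (e : Finset (Fin n))) : ω e = true := by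
  obtain ⟨e', he', hee'⟩ := h
  rw [← Subtype.ext hee']
  exact (mem_filter.mp he').2

def fanCover (n s r i : ℕ) : Set (Edge n → Bool) :=
  ⋃ v ∈ (univ : Finset (Fin n)), ⋃ S ∈ powersetCard s (univ.erase v),
    ⋃ R ∈ powersetCard r (powersetCard 2 (univ \ insert v S)),
    ⋃ I ∈ Fintype.piFinset
      (fun t => if t ∈ R then powersetCard i S else ({∅} : Finset (Finset (Fin n)))),
    allPresent (fan v R I)

lemma subset_fanCover (s r i : ℕ) :
    {ω : Edge n → Bool | ∃ v : Fin n, ∃ S : Finset (Fin n),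
      v ∉ S ∧ #S = s ∧ r < #(richPairs ω v S i)} ⊆ fanCover n s r i := by
  rintro ω ⟨v, S, hvS, hS, hr⟩
  obtain ⟨R, hRrich, hR⟩ := exists_subset_card_eq hr.le
  have hfan : ∀ t ∈ R, ∃ J ∈ powersetCard i S, ∀ x ∈ insert v J, memH (hedges ω) (insert x t) :=
    fun t ht => (exists_fan_of_mem_richPairs (hRrich ht)).2
  choose! J hJ hJfan using hfan
  simp only [fanCover, Set.mem_iUnion]
  refine ⟨v, mem_univ v, S, ?_, R, ?_, fun t => if t ∈ R then J t else ∅, ?_, ?_⟩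
  · exact mem_powersetCard.mpr
      ⟨fun a ha => mem_erase.mpr ⟨ne_of_mem_of_not_mem ha hvS, mem_univ a⟩, hS⟩
  · exact mem_powersetCard.mpr ⟨fun t ht => (exists_fan_of_mem_richPairs (hRrich ht)).1, hR⟩
  · refine Fintype.mem_piFinset.mpr fun t => ?_
    split_ifs with ht
    exacts [hJ t ht, mem_singleton_self _]
  · intro e he
    simp only [fan, mem_biUnion, mem_image] at he
    obtain ⟨t, ht, x, hx, hxt⟩ := he
    rw [if_pos ht] at hx
    exact eq_true_of_memH_hedges (hxt ▸ hJfan t ht x hx)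

lemma hypM_fanCover_le {p : ℝ} (hp0 : 0 ≤ p) (hp1 : p ≤ 1) (s r i : ℕ) :
    hypM n p (fanCover n s r i) ≤ n * (n.choose s * ((n ^ 2).choose r *
      ((s.choose i ^ r : ℕ) * ENNReal.ofReal p ^ (r * (i + 1))))) := by
  refine measure_biUnion_finset_le_mul _ (card_univ.trans (Fintype.card_fin n)).le fun v _ => ?_
  refine measure_biUnion_finset_le_mul _ ?_ fun S hS => ?_
  · rw [card_powersetCard]
    exact Nat.choose_le_choose s ((card_le_univ _).trans (by simp))
  obtain ⟨hSv, rfl⟩ := mem_powersetCard.mp hS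
  refine measure_biUnion_finset_le_mul _ ?_ fun R hR => ?_
  · rw [card_powersetCard, card_powersetCard]
    refine Nat.choose_le_choose r ((Nat.choose_le_pow _ 2).trans ?_)
    exact Nat.pow_le_pow_left ((card_le_univ _).trans (by simp)) 2
  obtain ⟨hR2, rfl⟩ := mem_powersetCard.mp hR
  refine measure_biUnion_finset_le_mul _ ?_ fun I hI => ?_
  · rw [card_piFinset_ite_singleton, card_powersetCard]
  have hIR : ∀ t ∈ R, I t ∈ powersetCard i S := fun t ht => by
    simpa [ht] using Fintype.mem_piFinset.mp hI t
  refine le_of_eq ?_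
  rw [hypM_allPresent hp0 hp1 (card_eq_three_of_mem_fan hR2 hIR),
    card_fan (fun hv => (mem_erase.mp (hSv hv)).1 rfl) hR2 hIR]

end Fans

lemma ofReal_gbound {p : ℝ} (hp0 : 0 ≤ p) (n s r i : ℕ) :
    ENNReal.ofReal (gbound n p s r i) = n * (n.choose s * ((n ^ 2).choose r *
      ((s.choose i ^ r : ℕ) * ENNReal.ofReal p ^ (r * (i + 1))))) := by
  rw [gbound, show (p * s.choose i * p ^ i) ^ r = (s.choose i) ^ r * p ^ (r * (i + 1)) by ring]
  simp [ENNReal.ofReal_mul, ENNReal.ofReal_pow, hp0, mul_assoc]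

theorem stmt_6_general (n : ℕ) (p : ℝ) (hp0 : 0 ≤ p) (hp1 : p ≤ 1)
    (s r i : ℕ) :
    hypM n p {ω : Edge n → Bool | ∃ v : Fin n, ∃ S : Finset (Fin n),
        v ∉ S ∧ S.card = s ∧
        r < ((Finset.powersetCard 2 (Finset.univ \ S)).filter fun t =>
              memH (hedges ω) (insert v t) ∧
              ∃ y ∈ t, ∃ z ∈ t, y ≠ z ∧ i ≤ codeg (hedges ω) S y z).card}
      ≤ ENNReal.ofReal (gbound n p s r i) :=
  calc _ ≤ hypM n p (fanCover n s r i) := measure_mono (subset_fanCover s r i)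
    _ ≤ _ := hypM_fanCover_le hp0 hp1 s r i
    _ = _ := (ofReal_gbound hp0 n s r i).symm

theorem stmt_6 (n : ℕ) (p : ℝ) (hp0 : 0 ≤ p) (hp1 : p ≤ 1)
    (s r i : ℕ) (hs : 0 < s) (hr : 0 < r) (hi : 0 < i)
    (hsn : s ≤ n) (hrn : r ≤ n.choose 2) (hin : i ≤ n) :
    hypM n p {ω : Edge n → Bool | ∃ v : Fin n, ∃ S : Finset (Fin n),
        v ∉ S ∧ S.card = s ∧
        r < ((Finset.powersetCard 2 (Finset.univ \ S)).filter fun t =>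
              memH (hedges ω) (insert v t) ∧
              ∃ y ∈ t, ∃ z ∈ t, y ≠ z ∧ i ≤ codeg (hedges ω) S y z).card}
      ≤ ENNReal.ofReal (gbound n p s r i) :=
  stmt_6_general n p hp0 hp1 s r i
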